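/- arXiv:2310.09160 — 2 statements merged into one kernel-verified Lean document; each statement's English description precedes it below -/
import Mathlib

section
/- For n ≥ 1 and γ ∈ (0,1), the Kelvin transform on the upper half-space preserves the weighted L^{2(n-2γ+2)/(n-2γ)} norm: for any measurable U : ℝ^{n+1}_+ → ℝ, setting U♯(x) = |x|^{-(n-2γ)} U(x/|x|²), one has ∫_{ℝ^{n+1}_+} x_N^{1-2γ} |U♯(x)|^{2(n-2γ+2)/(n-2γ)} dx = ∫_{ℝ^{n+1}_+} x_N^{1-2γ} |U(x)|^{2(n-2γ+2)/(n-2γ)} dx. -/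
/-!
The inversion `x ↦ x / |x|²` is an involution of the upper half-space whose derivative at `x` is
`|x|⁻²` times a reflection, so its Jacobian is `|x|^{-2(n+1)}`. Changing variables by it, the weight
`x_N^{1-2γ}` picks up `|x|^{-2(1-2γ)}`, and the exponent `p = 2(n-2γ+2)/(n-2γ)` is exactly the one
for which `|x|^{-(n-2γ)p}` from the Kelvin transform cancels both factors.
-/

open MeasureTheory Real EuclideanGeometry Module

section Inversion

variable {E F : Type*} [NormedAddCommGroup E] [InnerProductSpace ℝ E]
  [NormedAddCommGroup F] [NormedSpace ℝ F]

theorem inversion_zero (R : ℝ) (x : E) : inversion 0 R x = (R / ‖x‖) ^ 2 • x := by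
  simp [inversion]

variable [FiniteDimensional ℝ E]

theorem abs_det_smul_reflection (r : ℝ) (K : Submodule ℝ E) :
    |(r • (K.reflection : E →L[ℝ] E)).det| = |r| ^ finrank ℝ E := by
  rw [ContinuousLinearMap.det, ContinuousLinearMap.toLinearMap_smul, LinearMap.det_smul, abs_mul,
    abs_pow]
  erw [Submodule.det_reflection]
  simp

variable [MeasurableSpace E] [BorelSpace E]

theorem setIntegral_image_inversion (μ : Measure E) [μ.IsAddHaarMeasure] {c : E} {R : ℝ}
    (hR : R ≠ 0) {s : Set E} (hs : MeasurableSet s) (hc : c ∉ s) (g : E → F) :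
    ∫ y in inversion c R '' s, g y ∂μ =
      ∫ x in s, (R / dist x c) ^ (2 * finrank ℝ E) • g (inversion c R x) ∂μ := by
  have hderiv : ∀ x ∈ s, HasFDerivWithinAt (inversion c R)
      ((R / dist x c) ^ 2 • ((ℝ ∙ (x - c))ᗮ.reflection : E →L[ℝ] E)) s x :=
    fun x hx => (hasFDerivAt_inversion (ne_of_mem_of_not_mem hx hc)).hasFDerivWithinAt
  rw [integral_image_eq_integral_abs_det_fderiv_smul μ hs hderiv
    (inversion_injective c hR).injOn]
  refine setIntegral_congr_fun hs fun x _ => ?_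
  rw [abs_det_smul_reflection, abs_of_nonneg (sq_nonneg _), ← pow_mul]

end Inversion

theorem image_inversion_zero_halfSpace {ι : Type*} [Fintype ι] (i : ι) {R : ℝ} (hR : R ≠ 0) :
    inversion 0 R '' {x : EuclideanSpace ℝ ι | 0 < x i} = {x | 0 < x i} := by
  have hmaps : Set.MapsTo (inversion 0 R) {x : EuclideanSpace ℝ ι | 0 < x i} {x | 0 < x i} := by
    intro x (hx : 0 < x i)
    have hx0 : 0 < ‖x‖ := norm_pos_iff.2 (by rintro rfl; simp at hx)
    simp only [Set.mem_ofPred_eq, inversion_zero, PiLp.smul_apply, smul_eq_mul]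
    positivity
  exact hmaps.image_subset.antisymm fun y hy => ⟨_, hmaps hy, inversion_inversion 0 hR y⟩

theorem rpow_mul_abs_rpow_neg_mul_rpow_eq {r t : ℝ} (hr : 0 < r) (ht : 0 ≤ t) (u : ℝ) (d : ℕ)
    {a k p : ℝ} (hkp : k * p = 2 * (d + a)) :
    t ^ a * |r ^ (-k) * u| ^ p = (r ^ (2 * d))⁻¹ * (((r ^ 2)⁻¹ * t) ^ a * |u| ^ p) := by
  rw [abs_mul, abs_of_pos (rpow_pos_of_pos hr _), mul_rpow (rpow_nonneg hr.le _) (abs_nonneg u),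
    ← rpow_mul hr.le, ← rpow_natCast, ← rpow_neg hr.le, ← rpow_natCast, ← rpow_neg hr.le,
    mul_rpow (rpow_nonneg hr.le _) ht, ← rpow_mul hr.le]
  have hexp : -k * p = -(2 * d : ℕ) + -(2 : ℕ) * a := by push_cast; linarith
  rw [hexp, rpow_add hr]
  ring

theorem setIntegral_halfSpace_rpow_mul_abs_kelvin_rpow {ι : Type*} [Fintype ι] (i : ι)
    {a k p : ℝ} (hkp : k * p = 2 * (Fintype.card ι + a)) (U : EuclideanSpace ℝ ι → ℝ) :
    ∫ x in {x : EuclideanSpace ℝ ι | 0 < x i}, x i ^ a * |‖x‖ ^ (-k) * U ((‖x‖ ^ 2)⁻¹ • x)| ^ p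
      = ∫ x in {x : EuclideanSpace ℝ ι | 0 < x i}, x i ^ a * |U x| ^ p := by
  have hS : MeasurableSet {x : EuclideanSpace ℝ ι | 0 < x i} :=
    measurableSet_lt measurable_const (EuclideanSpace.proj i).continuous.measurable
  conv_rhs => rw [← image_inversion_zero_halfSpace i one_ne_zero]
  rw [setIntegral_image_inversion volume one_ne_zero hS (lt_irrefl (0 : ℝ))]
  refine setIntegral_congr_fun hS fun x (hx : 0 < x i) => ?_
  have hx0 : 0 < ‖x‖ := norm_pos_iff.2 (by rintro rfl; simp at hx)
  rw [finrank_euclideanSpace, dist_zero_right, inversion_zero, smul_eq_mul, PiLp.smul_apply,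
    smul_eq_mul, one_div, inv_pow, inv_pow]
  exact rpow_mul_abs_rpow_neg_mul_rpow_eq hx0 hx.le _ _ hkp

theorem stmt3_general (n : ℕ) (γ : ℝ)
    (U UK : EuclideanSpace ℝ (Fin (n+1)) → ℝ)
    (hUK : ∀ x, UK x = ‖x‖ ^ (-((n:ℝ) - 2*γ)) * U ((‖x‖ ^ 2)⁻¹ • x)) :
    ∫ x in {x : EuclideanSpace ℝ (Fin (n+1)) | 0 < x (Fin.last n)},
        (x (Fin.last n)) ^ (1-2*γ) * |UK x| ^ (2*((n:ℝ)-2*γ+2)/((n:ℝ)-2*γ))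
      = ∫ x in {x : EuclideanSpace ℝ (Fin (n+1)) | 0 < x (Fin.last n)},
        (x (Fin.last n)) ^ (1-2*γ) * |U x| ^ (2*((n:ℝ)-2*γ+2)/((n:ℝ)-2*γ)) := by
  -- if `n = 2γ` the exponent is a division by zero, hence `0`, and both integrands are the weight
  rcases eq_or_ne ((n:ℝ) - 2*γ) 0 with hk | hk
  · simp [hk]
  simp_rw [hUK]
  refine setIntegral_halfSpace_rpow_mul_abs_kelvin_rpow _ ?_ U
  rw [Fintype.card_fin, mul_div_cancel₀ _ hk]
  push_cast
  ring

/-- The Kelvin transform `U♯(x) = |x|^{-(n-2γ)} U(x/|x|²)` on the upper half-space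
`ℝ^{n+1}_+ = {x : x_N > 0}` preserves the weighted `L^{2(n-2γ+2)/(n-2γ)}` norm with
weight `x_N^{1-2γ}`:
`∫_{ℝ^{n+1}_+} x_N^{1-2γ} |U♯|^{2(n-2γ+2)/(n-2γ)} = ∫_{ℝ^{n+1}_+} x_N^{1-2γ} |U|^{2(n-2γ+2)/(n-2γ)}`. -/
theorem stmt3 (n : ℕ) (hn : 1 ≤ n) (γ : ℝ) (hγ : γ ∈ Set.Ioo (0:ℝ) 1)
    (U UK : EuclideanSpace ℝ (Fin (n+1)) → ℝ) (hU : Measurable U)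
    (hUK : ∀ x, UK x = ‖x‖ ^ (-((n:ℝ) - 2*γ)) * U ((‖x‖ ^ 2)⁻¹ • x)) :
    ∫ x in {x : EuclideanSpace ℝ (Fin (n+1)) | 0 < x (Fin.last n)},
        (x (Fin.last n)) ^ (1-2*γ) * |UK x| ^ (2*((n:ℝ)-2*γ+2)/((n:ℝ)-2*γ))
      = ∫ x in {x : EuclideanSpace ℝ (Fin (n+1)) | 0 < x (Fin.last n)},
        (x (Fin.last n)) ^ (1-2*γ) * |U x| ^ (2*((n:ℝ)-2*γ+2)/((n:ℝ)-2*γ)) :=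
  stmt3_general n γ U UK hUK
end

section
/- Let n ≥ 1 and γ ∈ (1/2, 1). Let χ ∈ C_c^∞(B^{n+1}(0,2)) with χ = 1 on B^{n+1}(0,1), and for R > 2 define χ_R(x̄, x_N) = χ(x̄, x_N − R) on the upper half-space. Then the ratio ‖χ_R‖_{L^{2(n-2γ+2)/(n-2γ)}(ℝ^{n+1}_+; x_N^{1-2γ})} / ‖∇χ_R‖_{L^2(ℝ^{n+1}_+; x_N^{1-2γ})} tends to infinity as R → ∞. Consequently, there is no constant C > 0 such that the weighted Sobolev inequality ‖U‖_{L^{2(n-2γ+2)/(n-2γ)}(ℝ^{n+1}_+; x_N^{1-2γ})} ≤ C ‖∇U‖_{L^2(ℝ^{n+1}_+; x_N^{1-2γ})} holds for all smooth compactly supported U on the closed half-space. -/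
open MeasureTheory Real Function
set_option maxHeartbeats 1000000

section AuxSobolev

private lemma projN_cont (n : ℕ) :
    Continuous (fun x : EuclideanSpace ℝ (Fin (n+1)) => x (Fin.last n)) :=
  (continuous_apply _).comp (PiLp.continuous_ofLp 2 _)

private lemma halfspace_meas (n : ℕ) :
    MeasurableSet {x : EuclideanSpace ℝ (Fin (n+1)) | 0 < x (Fin.last n)} :=
  (isOpen_lt continuous_const (projN_cont n)).measurableSet

private lemma coord_le_norm (n : ℕ) (v : EuclideanSpace ℝ (Fin (n+1))) :
    |v (Fin.last n)| ≤ ‖v‖ := by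
  have := abs_real_inner_le_norm (EuclideanSpace.single (Fin.last n) (1:ℝ)) v
  rwa [EuclideanSpace.inner_single_left, EuclideanSpace.norm_single, map_one, one_mul,
    norm_one, one_mul] at this

private lemma cR_apply (n : ℕ) (R : ℝ) :
    (R • EuclideanSpace.single (Fin.last n) (1:ℝ)) (Fin.last n) = R := by
  simp [EuclideanSpace.single_apply]

private lemma integrable_of_supp {n : ℕ} (f : EuclideanSpace ℝ (Fin (n+1)) → ℝ)
    (hf : Continuous f) (hfs : ∀ y, f y ≠ 0 → ‖y‖ < 2) : Integrable f := by
  refine hf.integrable_of_hasCompactSupport (HasCompactSupport.intro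
    (isCompact_closedBall (0:EuclideanSpace ℝ (Fin (n+1))) 2) ?_)
  intro x hx
  by_contra hne
  exact hx (Metric.mem_closedBall.2 (by simpa [dist_zero_right] using (hfs x hne).le))

private lemma fderiv_translate {n : ℕ} (χ : EuclideanSpace ℝ (Fin (n+1)) → ℝ)
    (hχ : Differentiable ℝ χ) (c x : EuclideanSpace ℝ (Fin (n+1))) :
    fderiv ℝ (fun y => χ (y - c)) x = fderiv ℝ χ (x - c) := by
  have h1 : HasFDerivAt (fun y : EuclideanSpace ℝ (Fin (n+1)) => y - c)
      (ContinuousLinearMap.id ℝ _) x := (hasFDerivAt_id x).sub_const c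
  have h2 := (hχ (x - c)).hasFDerivAt
  have h3 := h2.comp x h1
  simpa [Function.comp_def] using h3.fderiv

private lemma integral_pos_of_supp {n : ℕ} (f : EuclideanSpace ℝ (Fin (n+1)) → ℝ)
    (hf : Continuous f) (hf0 : ∀ y, 0 ≤ f y) (hfi : Integrable f)
    (x₀ : EuclideanSpace ℝ (Fin (n+1))) (hx₀ : f x₀ ≠ 0) : 0 < ∫ y, f y := by
  rw [integral_pos_iff_support_of_nonneg_ae (ae_of_all _ hf0) hfi]
  exact hf.isOpen_support.measure_pos volume ⟨x₀, hx₀⟩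

/-- Key comparison lemma: two-sided bounds for the translated weighted integral. -/
private lemma keyLemma (n : ℕ) (p : ℝ) (hp : p < 0)
    (f : EuclideanSpace ℝ (Fin (n+1)) → ℝ) (hf : Continuous f) (hf0 : ∀ y, 0 ≤ f y)
    (hfs : ∀ y, f y ≠ 0 → ‖y‖ < 2) (R : ℝ) (hR : 2 < R) :
    (R+2) ^ p * (∫ y, f y) ≤
      (∫ x in {x : EuclideanSpace ℝ (Fin (n+1)) | 0 < x (Fin.last n)},
        (x (Fin.last n)) ^ p * f (x - R • EuclideanSpace.single (Fin.last n) 1)) ∧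
    (∫ x in {x : EuclideanSpace ℝ (Fin (n+1)) | 0 < x (Fin.last n)},
        (x (Fin.last n)) ^ p * f (x - R • EuclideanSpace.single (Fin.last n) 1)) ≤
      (R-2) ^ p * (∫ y, f y) := by
  set N := Fin.last n
  set c : EuclideanSpace ℝ (Fin (n+1)) := R • EuclideanSpace.single N 1 with hc
  set H : Set (EuclideanSpace ℝ (Fin (n+1))) := {x | 0 < x N} with hH
  set φ : EuclideanSpace ℝ (Fin (n+1)) → ℝ := fun x => f (x - c) with hφdef
  have hHmeas : MeasurableSet H := halfspace_meas n
  have hfint : Integrable f := integrable_of_supp f hf hfs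
  have hφcont : Continuous φ := hf.comp (continuous_id.sub continuous_const)
  have hφint : Integrable φ := hfint.comp_sub_right c
  have hcoord : ∀ x, φ x ≠ 0 → R - 2 < x N ∧ x N < R + 2 := by
    intro x hx
    have h1 : ‖x - c‖ < 2 := hfs _ hx
    have h2 : |(x - c) N| ≤ ‖x - c‖ := coord_le_norm n _
    have h3 : (x - c) N = x N - R := by
      have h4 := cR_apply n R
      simp only [PiLp.sub_apply]
      rw [hc, h4]
    rw [h3] at h2
    have h5 : |x N - R| < 2 := lt_of_le_of_lt h2 h1
    rw [abs_lt] at h5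
    constructor <;> linarith [h5.1, h5.2]
  have hupper : ∀ x ∈ H, (x N) ^ p * φ x ≤ (R-2) ^ p * φ x := by
    intro x hx
    rcases eq_or_ne (φ x) 0 with h | h
    · simp [h]
    · have h2 := hcoord x h
      exact mul_le_mul_of_nonneg_right
        (Real.rpow_le_rpow_of_nonpos (by linarith [h2.1]) (by linarith [h2.1]) hp.le) (hf0 _)
  have hlower : ∀ x ∈ H, (R+2) ^ p * φ x ≤ (x N) ^ p * φ x := by
    intro x hx
    rcases eq_or_ne (φ x) 0 with h | h
    · simp [h]
    · have h2 := hcoord x h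
      exact mul_le_mul_of_nonneg_right
        (Real.rpow_le_rpow_of_nonpos hx (by linarith [h2.2]) hp.le) (hf0 _)
  have hwmeas : AEStronglyMeasurable (fun x : EuclideanSpace ℝ (Fin (n+1)) => (x N) ^ p * φ x)
      (volume.restrict H) := by
    refine ContinuousOn.aestronglyMeasurable ?_ hHmeas
    refine ContinuousOn.mul ?_ hφcont.continuousOn
    intro x hx
    exact ((projN_cont n).continuousAt.rpow_const (Or.inl (ne_of_gt hx))).continuousWithinAt
  have hboundint : IntegrableOn (fun x => (R-2) ^ p * φ x) H :=
    (hφint.const_mul _).integrableOn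
  have hgint : IntegrableOn (fun x : EuclideanSpace ℝ (Fin (n+1)) => (x N) ^ p * φ x) H := by
    refine Integrable.mono' hboundint hwmeas ?_
    refine (ae_restrict_iff' hHmeas).2 (ae_of_all _ ?_)
    intro x hx
    have hnn : 0 ≤ (x N) ^ p * φ x :=
      mul_nonneg (Real.rpow_nonneg (le_of_lt hx) p) (hf0 _)
    rw [Real.norm_eq_abs, abs_of_nonneg hnn]
    exact hupper x hx
  have hlowint : IntegrableOn (fun x => (R+2) ^ p * φ x) H :=
    (hφint.const_mul _).integrableOn
  have hφH : (∫ x in H, φ x) = ∫ y, f y := by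
    rw [setIntegral_eq_integral_of_forall_compl_eq_zero (fun x hx => ?_)]
    · exact integral_sub_right_eq_self f c
    · by_contra h
      have := (hcoord x h).1
      exact hx (show (0:ℝ) < x N by linarith)
  constructor
  · calc (R+2) ^ p * ∫ y, f y = ∫ x in H, (R+2) ^ p * φ x := by
          rw [integral_const_mul, hφH]
      _ ≤ ∫ x in H, (x N) ^ p * φ x := setIntegral_mono_on hlowint hgint hHmeas hlower
  · calc (∫ x in H, (x N) ^ p * φ x) ≤ ∫ x in H, (R-2) ^ p * φ x :=
          setIntegral_mono_on hgint hboundint hHmeas hupper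
      _ = (R-2) ^ p * ∫ y, f y := by rw [integral_const_mul, hφH]

end AuxSobolev

/-- Weighted `L^q` "norm-to-the-q" on the upper half-space `{x : x_N > 0} ⊂ ℝ^{n+1}`
with weight `x_N^{1-2γ}`. -/
noncomputable def wIntegral (n : ℕ) (γ q : ℝ)
    (U : EuclideanSpace ℝ (Fin (n+1)) → ℝ) : ℝ :=
  ∫ x in {x : EuclideanSpace ℝ (Fin (n+1)) | 0 < x (Fin.last n)},
    (x (Fin.last n)) ^ (1-2*γ) * |U x| ^ q

/-- Weighted Dirichlet energy on the upper half-space with weight `x_N^{1-2γ}`. -/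
noncomputable def wDirichlet (n : ℕ) (γ : ℝ)
    (U : EuclideanSpace ℝ (Fin (n+1)) → ℝ) : ℝ :=
  ∫ x in {x : EuclideanSpace ℝ (Fin (n+1)) | 0 < x (Fin.last n)},
    (x (Fin.last n)) ^ (1-2*γ) * ‖fderiv ℝ U x‖ ^ 2

/-- For `γ ∈ (1/2, 1)` the weighted Sobolev inequality on the upper half-space fails:
translating a fixed bump `χ` (supported in `B(0,2)`, `≡ 1` on `B(0,1)`) upward by `R`,
the ratio of the weighted `L^{2(n-2γ+2)/(n-2γ)}` norm to the weighted Dirichlet energy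
tends to `∞` as `R → ∞`; consequently no constant `C > 0` makes the weighted Sobolev
inequality hold for all smooth compactly supported functions. -/
theorem stmt4 (n : ℕ) (hn : 1 ≤ n) (γ : ℝ) (hγ : γ ∈ Set.Ioo (1/2 : ℝ) 1)
    (h2γ : 2*γ < n)
    (χ : EuclideanSpace ℝ (Fin (n+1)) → ℝ) (hχ : ContDiff ℝ (⊤ : ℕ∞) χ)
    (hsupp : tsupport χ ⊆ Metric.ball 0 2)
    (hone : ∀ x ∈ Metric.ball (0 : EuclideanSpace ℝ (Fin (n+1))) 1, χ x = 1) :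
    (Filter.Tendsto (fun R : ℝ =>
        (wIntegral n γ (2*((n:ℝ)-2*γ+2)/((n:ℝ)-2*γ))
            (fun x => χ (x - R • EuclideanSpace.single (Fin.last n) 1)))
              ^ (((n:ℝ)-2*γ)/(2*((n:ℝ)-2*γ+2)))
        / (wDirichlet n γ
            (fun x => χ (x - R • EuclideanSpace.single (Fin.last n) 1))) ^ (1/2 : ℝ))
      Filter.atTop Filter.atTop) ∧
    ¬ ∃ C : ℝ, 0 < C ∧ ∀ U : EuclideanSpace ℝ (Fin (n+1)) → ℝ,
        ContDiff ℝ (⊤ : ℕ∞) U → HasCompactSupport U →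
        (wIntegral n γ (2*((n:ℝ)-2*γ+2)/((n:ℝ)-2*γ)) U)
            ^ (((n:ℝ)-2*γ)/(2*((n:ℝ)-2*γ+2)))
          ≤ C * (wDirichlet n γ U) ^ (1/2 : ℝ) := by
  obtain ⟨hγ1, hγ2⟩ := hγ
  set q : ℝ := 2*((n:ℝ)-2*γ+2)/((n:ℝ)-2*γ) with hqdef
  set p : ℝ := 1-2*γ with hpdef
  have hm : 0 < (n:ℝ)-2*γ := by linarith
  have hp : p < 0 := by rw [hpdef]; linarith
  have hq2 : 2 < q := by
    rw [hqdef, lt_div_iff₀ hm]; linarith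
  have hq0 : 0 < q := lt_trans two_pos hq2
  have hexp : ((n:ℝ)-2*γ)/(2*((n:ℝ)-2*γ+2)) = 1/q := by
    rw [hqdef, one_div_div]
  -- the two profile functions
  set f₁ : EuclideanSpace ℝ (Fin (n+1)) → ℝ := fun y => |χ y| ^ q with hf₁def
  set f₂ : EuclideanSpace ℝ (Fin (n+1)) → ℝ := fun y => ‖fderiv ℝ χ y‖ ^ 2 with hf₂def
  have hf₁cont : Continuous f₁ :=
    (continuous_abs.comp hχ.continuous).rpow_const (fun x => Or.inr hq0.le)
  have hf₁0 : ∀ y, 0 ≤ f₁ y := fun y => Real.rpow_nonneg (abs_nonneg _) _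
  have hf₁s : ∀ y, f₁ y ≠ 0 → ‖y‖ < 2 := by
    intro y hy
    have hχy : χ y ≠ 0 := by
      intro h0
      apply hy
      rw [hf₁def]
      simp only [h0, abs_zero]
      exact Real.zero_rpow hq0.ne'
    have : y ∈ tsupport χ := subset_closure hχy
    exact mem_ball_zero_iff.1 (hsupp this)
  have hf₂cont : Continuous f₂ :=
    ((hχ.continuous_fderiv (by simp)).norm).pow 2
  have hf₂0 : ∀ y, 0 ≤ f₂ y := fun y => pow_nonneg (norm_nonneg _) 2
  have hf₂s : ∀ y, f₂ y ≠ 0 → ‖y‖ < 2 := by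
    intro y hy
    have hfd : fderiv ℝ χ y ≠ 0 := by
      intro h0
      apply hy
      rw [hf₂def]
      simp [h0]
    have hmem : y ∈ tsupport χ := by
      by_contra hmem
      have heq : χ =ᶠ[nhds y] 0 := notMem_tsupport_iff_eventuallyEq.1 hmem
      have : fderiv ℝ χ y = fderiv ℝ (fun _ => (0:ℝ)) y := heq.fderiv_eq
      rw [fderiv_fun_const] at this
      exact hfd (by simpa using this)
    exact mem_ball_zero_iff.1 (hsupp hmem)
  have hf₁int : Integrable f₁ := integrable_of_supp f₁ hf₁cont hf₁s
  have hf₂int : Integrable f₂ := integrable_of_supp f₂ hf₂cont hf₂s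
  set A : ℝ := ∫ y, f₁ y with hAdef
  set D : ℝ := ∫ y, f₂ y with hDdef
  have hA : 0 < A := by
    have hball : (0:ℝ) < (volume (Metric.ball (0:EuclideanSpace ℝ (Fin (n+1))) 1)).toReal :=
      ENNReal.toReal_pos (Metric.measure_ball_pos volume 0 one_pos).ne' measure_ball_lt_top.ne
    refine lt_of_lt_of_le hball ?_
    calc (volume (Metric.ball (0:EuclideanSpace ℝ (Fin (n+1))) 1)).toReal
        = ∫ _ in Metric.ball (0:EuclideanSpace ℝ (Fin (n+1))) 1, (1:ℝ) := by
          rw [setIntegral_const]; simp [Measure.real]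
      _ = ∫ y in Metric.ball (0:EuclideanSpace ℝ (Fin (n+1))) 1, f₁ y := by
          refine setIntegral_congr_fun measurableSet_ball (fun y hy => ?_)
          rw [hf₁def]
          simp only [hone y hy, abs_one]
          exact (Real.one_rpow q).symm
      _ ≤ A := setIntegral_le_integral hf₁int (ae_of_all _ hf₁0)
  have hD : 0 < D := by
    have hx₀ : ∃ x, fderiv ℝ χ x ≠ 0 := by
      by_contra hno
      push_neg at hno
      have hconst : ∀ x, χ x = χ 0 := fun x =>
        is_const_of_fderiv_eq_zero (hχ.differentiable (by simp)) hno x 0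
      set y3 : EuclideanSpace ℝ (Fin (n+1)) := (3:ℝ) • EuclideanSpace.single (Fin.last n) 1
        with hy3
      have hn3 : ‖y3‖ = 3 := by
        rw [hy3, norm_smul, EuclideanSpace.norm_single, norm_one, mul_one]
        norm_num
      have h0 : χ y3 = 0 := by
        apply image_eq_zero_of_notMem_tsupport
        intro hmem
        have := hsupp hmem
        rw [mem_ball_zero_iff, hn3] at this
        norm_num at this
      have h1 : χ 0 = 1 := hone 0 (Metric.mem_ball_self one_pos)
      rw [hconst y3, h1] at h0
      norm_num at h0
    obtain ⟨x₀, hx₀⟩ := hx₀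
    refine integral_pos_of_supp f₂ hf₂cont hf₂0 hf₂int x₀ ?_
    rw [hf₂def]
    exact pow_ne_zero 2 (norm_ne_zero_iff.2 hx₀)
  -- identifications and bounds for the translated functions
  set NI : ℝ → ℝ := fun R => wIntegral n γ q
    (fun x => χ (x - R • EuclideanSpace.single (Fin.last n) 1)) with hNIdef
  set DI : ℝ → ℝ := fun R => wDirichlet n γ
    (fun x => χ (x - R • EuclideanSpace.single (Fin.last n) 1)) with hDIdef
  have hNIbounds : ∀ R, 2 < R → (R+2) ^ p * A ≤ NI R ∧ NI R ≤ (R-2) ^ p * A := by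
    intro R hR
    have h := keyLemma n p hp f₁ hf₁cont hf₁0 hf₁s R hR
    exact h
  have hDIbounds : ∀ R, 2 < R → (R+2) ^ p * D ≤ DI R ∧ DI R ≤ (R-2) ^ p * D := by
    intro R hR
    have h := keyLemma n p hp f₂ hf₂cont hf₂0 hf₂s R hR
    have heq : DI R = ∫ x in {x : EuclideanSpace ℝ (Fin (n+1)) | 0 < x (Fin.last n)},
        (x (Fin.last n)) ^ p * f₂ (x - R • EuclideanSpace.single (Fin.last n) 1) := by
      rw [hDIdef]
      simp only [wDirichlet]
      simp only [fderiv_translate χ (hχ.differentiable (by simp))]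
      rfl
    rw [heq]
    exact h
  have hDIpos : ∀ R, 2 < R → 0 < DI R := by
    intro R hR
    have := (hDIbounds R hR).1
    have hpos : 0 < (R+2) ^ p * D :=
      mul_pos (Real.rpow_pos_of_pos (by linarith) p) hD
    linarith
  have hNInonneg : ∀ R, 2 < R → 0 ≤ NI R := by
    intro R hR
    have := (hNIbounds R hR).1
    have hpos : 0 < (R+2) ^ p * A :=
      mul_pos (Real.rpow_pos_of_pos (by linarith) p) hA
    linarith
  -- the main tendsto statement
  have hmain : Filter.Tendsto (fun R : ℝ => (NI R) ^ (1/q) / (DI R) ^ (1/2 : ℝ))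
      Filter.atTop Filter.atTop := by
    set K : ℝ := ((2:ℝ)^p * A)^(1/q) / (((1/2:ℝ))^p * D)^(1/2:ℝ) with hKdef
    set e : ℝ := p*(1/q) - p*(1/2) with hedef
    have hK : 0 < K := by
      refine div_pos (Real.rpow_pos_of_pos (mul_pos (Real.rpow_pos_of_pos two_pos p) hA) _) ?_
      exact Real.rpow_pos_of_pos (mul_pos (Real.rpow_pos_of_pos (by norm_num) p) hD) _
    have he : 0 < e := by
      rw [hedef]
      have h1q : 1/q < 1/2 := by
        rw [div_lt_div_iff₀ hq0 two_pos]
        linarith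
      nlinarith
    have hbase : Filter.Tendsto (fun R : ℝ => K * R ^ e) Filter.atTop Filter.atTop :=
      (tendsto_rpow_atTop he).const_mul_atTop hK
    refine Filter.tendsto_atTop_mono' Filter.atTop ?_ hbase
    filter_upwards [Filter.eventually_ge_atTop (6:ℝ)] with R hR6
    have hR2 : 2 < R := by linarith
    have hR0 : 0 < R := by linarith
    -- step 1 : K * R^e = ((2R)^p A)^(1/q) / ((R/2)^p D)^(1/2)
    have h2R : ((2:ℝ)*R)^p = (2:ℝ)^p * R^p := Real.mul_rpow (by norm_num) hR0.le
    have hhR : (R/2)^p = ((1/2:ℝ))^p * R^p := by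
      have : R/2 = (1/2:ℝ)*R := by ring
      rw [this, Real.mul_rpow (by norm_num) hR0.le]
    have e1 : (((2:ℝ)*R)^p * A)^(1/q) = ((2:ℝ)^p * A)^(1/q) * R^(p*(1/q)) := by
      rw [h2R, mul_right_comm, Real.mul_rpow
        (mul_nonneg (Real.rpow_nonneg (by norm_num) p) hA.le)
        (Real.rpow_nonneg hR0.le p), ← Real.rpow_mul hR0.le]
    have e2 : ((R/2)^p * D)^(1/2:ℝ) = (((1/2:ℝ))^p * D)^(1/2:ℝ) * R^(p*(1/2)) := by
      rw [hhR, mul_right_comm, Real.mul_rpow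
        (mul_nonneg (Real.rpow_nonneg (by norm_num) p) hD.le)
        (Real.rpow_nonneg hR0.le p), ← Real.rpow_mul hR0.le]
    have step1 : K * R ^ e = (((2:ℝ)*R)^p * A)^(1/q) / ((R/2)^p * D)^(1/2:ℝ) := by
      rw [e1, e2, mul_div_mul_comm, hKdef, hedef, Real.rpow_sub hR0]
    rw [step1]
    -- step 2
    have hden1 : (0:ℝ) < ((R-2)^p * D)^(1/2:ℝ) :=
      Real.rpow_pos_of_pos (mul_pos (Real.rpow_pos_of_pos (by linarith) p) hD) _
    have step2 : (((2:ℝ)*R)^p * A)^(1/q) / ((R/2)^p * D)^(1/2:ℝ) ≤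
        ((R+2)^p * A)^(1/q) / ((R-2)^p * D)^(1/2:ℝ) := by
      refine div_le_div₀ (Real.rpow_nonneg
        (mul_nonneg (Real.rpow_nonneg (by linarith) p) hA.le) _) ?_ hden1 ?_
      · refine Real.rpow_le_rpow
          (mul_nonneg (Real.rpow_nonneg (by linarith) p) hA.le) ?_ (one_div_nonneg.2 hq0.le)
        refine mul_le_mul_of_nonneg_right ?_ hA.le
        exact Real.rpow_le_rpow_of_nonpos (by linarith) (by linarith) hp.le
      · refine Real.rpow_le_rpow
          (mul_nonneg (Real.rpow_nonneg (by linarith) p) hD.le) ?_ (by norm_num)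
        refine mul_le_mul_of_nonneg_right ?_ hD.le
        exact Real.rpow_le_rpow_of_nonpos (by linarith) (by linarith) hp.le
    refine le_trans step2 ?_
    -- step 3
    have hdenDI : (0:ℝ) < (DI R) ^ (1/2:ℝ) :=
      Real.rpow_pos_of_pos (hDIpos R hR2) _
    refine div_le_div₀ (Real.rpow_nonneg (hNInonneg R hR2) _) ?_ hdenDI ?_
    · exact Real.rpow_le_rpow
        (mul_nonneg (Real.rpow_nonneg (by linarith) p) hA.le)
        (hNIbounds R hR2).1 (one_div_nonneg.2 hq0.le)
    · exact Real.rpow_le_rpow (hDIpos R hR2).le (hDIbounds R hR2).2 (by norm_num)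
  constructor
  · -- rewrite the exponent to 1/q
    have : (fun R : ℝ =>
        (wIntegral n γ (2*((n:ℝ)-2*γ+2)/((n:ℝ)-2*γ))
            (fun x => χ (x - R • EuclideanSpace.single (Fin.last n) 1)))
              ^ (((n:ℝ)-2*γ)/(2*((n:ℝ)-2*γ+2)))
        / (wDirichlet n γ
            (fun x => χ (x - R • EuclideanSpace.single (Fin.last n) 1))) ^ (1/2 : ℝ)) =
        (fun R : ℝ => (NI R) ^ (1/q) / (DI R) ^ (1/2 : ℝ)) := by
      funext R
      rw [hexp]
    rw [this]
    exact hmain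
  · rintro ⟨C, hC, hall⟩
    obtain ⟨R, hRC, hR2⟩ :=
      ((hmain.eventually_gt_atTop C).and (Filter.eventually_gt_atTop (2:ℝ))).exists
    set c : EuclideanSpace ℝ (Fin (n+1)) := R • EuclideanSpace.single (Fin.last n) 1 with hcdef
    have hUsmooth : ContDiff ℝ (⊤ : ℕ∞) (fun x => χ (x - c)) :=
      hχ.comp (contDiff_id.sub contDiff_const)
    have hUcs : HasCompactSupport (fun x : EuclideanSpace ℝ (Fin (n+1)) => χ (x - c)) := by
      refine HasCompactSupport.intro (isCompact_closedBall c 2) ?_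
      intro x hx
      by_contra hne
      apply hx
      have : x - c ∈ tsupport χ := subset_closure hne
      have h2 := mem_ball_zero_iff.1 (hsupp this)
      rw [Metric.mem_closedBall, dist_eq_norm]
      linarith
    have hineq := hall (fun x => χ (x - c)) hUsmooth hUcs
    rw [hexp] at hineq
    have hineq' : (NI R) ^ (1/q) ≤ C * (DI R) ^ (1/2:ℝ) := hineq
    have hratio : (NI R) ^ (1/q) / (DI R) ^ (1/2:ℝ) ≤ C := by
      rw [div_le_iff₀ (Real.rpow_pos_of_pos (hDIpos R hR2) _)]
      exact hineq'
    exact absurd hratio (not_le.2 hRC)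
end
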